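/- arXiv:1403.5570 — 3 statements merged into one kernel-verified Lean document; each statement's English description precedes it below -/
import Mathlib

section
/- Suppose 𝔥 is a realization whose Cartan matrix has determinant invertible in k. Then every vector v ∈ 𝔥 decomposes uniquely as v = x + u where x lies in the k-span of the simple coroots Δ^∨ and u lies in the common kernel of all simple roots α_s; that is, 𝔥 = (k·Δ^∨) ⊕ ⋂_{s∈S} ker(α_s). -/
/-- If the Cartan matrix of a realization has invertible determinant,
then every vector `v ∈ V` decomposes uniquely as `v = x + u` with `x` in the span
of the simple coroots and `u` in the common kernel of all simple roots. -/
theorem decomposition_span_coroots_kernel {k : Type*} [CommRing k] {V : Type*}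
    [AddCommGroup V] [Module k V] [Module.Free k V] [Module.Finite k V]
    {S : Type*} [Fintype S] [DecidableEq S]
    (coroot : S → V) (root : S → Module.Dual k V)
    (hpair : ∀ s : S, root s (coroot s) = 2)
    (hdet : IsUnit (Matrix.det (Matrix.of fun s t : S => root t (coroot s)))) :
    ∀ v : V, ∃! p : V × V,
      p.1 ∈ Submodule.span k (Set.range coroot) ∧
      p.2 ∈ (⨅ s : S, LinearMap.ker (root s)) ∧
      v = p.1 + p.2 := by
  intro v
  set A : Matrix S S k := Matrix.of fun s t : S => root t (coroot s) with hA
  haveI : Invertible A := A.invertibleOfIsUnitDet hdet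
  -- key: pairing of a combination of coroots with roots is vecMul with A
  have hpairing : ∀ (c : S → k) (t : S),
      root t (∑ s, c s • coroot s) = (Matrix.vecMul c A) t := by
    intro c t
    simp [Matrix.vecMul, dotProduct, hA, mul_comm]
  -- key injectivity: a span element killed by all roots is 0
  have hinj : ∀ y : V, y ∈ Submodule.span k (Set.range coroot) →
      (∀ t : S, root t y = 0) → y = 0 := by
    intro y hy hroot
    obtain ⟨c, rfl⟩ := (Finsupp.mem_span_range_iff_exists_finsupp.mp hy)
    have hy' : (∑ s, c s • coroot s) = c.sum fun i a => a • coroot i := by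
      rw [Finsupp.sum_fintype]; intro; simp
    have hc : Matrix.vecMul (fun s => c s) A = 0 := by
      funext t
      rw [← hpairing]
      rw [hy']
      exact hroot t
    have : (fun s => c s) = 0 := by
      have := congrArg (fun z => Matrix.vecMul z A⁻¹) hc
      simpa [Matrix.vecMul_vecMul, Matrix.mul_nonsing_inv A
        hdet, Matrix.zero_vecMul] using this
    rw [← hy']
    simp [funext_iff.mp this]
  classical
  set w : S → k := fun t => root t v with hw
  set c : S → k := Matrix.vecMul w A⁻¹ with hc
  set x : V := ∑ s, c s • coroot s with hx
  have hxspan : x ∈ Submodule.span k (Set.range coroot) :=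
    Submodule.sum_mem _ fun s _ =>
      Submodule.smul_mem _ _ (Submodule.subset_span ⟨s, rfl⟩)
  have hxroot : ∀ t : S, root t x = w t := by
    intro t
    rw [hx, hpairing, hc, Matrix.vecMul_vecMul,
      Matrix.nonsing_inv_mul A hdet]
    simp
  refine ⟨(x, v - x), ⟨hxspan, ?_, by abel_nf; simp⟩, ?_⟩
  · simp only [Submodule.mem_iInf, LinearMap.mem_ker]
    intro t
    simp [hxroot t, hw]
  · rintro ⟨y, u⟩ ⟨hyspan, hu, hv⟩
    simp only [Submodule.mem_iInf, LinearMap.mem_ker] at hu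
    have hyx : y - x = 0 := by
      refine hinj _ (Submodule.sub_mem _ hyspan hxspan) fun t => ?_
      have : root t y = root t v := by
        rw [hv]; simp [hu t]
      simp [map_sub, this, hxroot t, hw]
    have hyeq : y = x := by rwa [sub_eq_zero] at hyx
    have hueq : u = v - x := by
      rw [hv, hyeq]; abel
    simp [hyeq, hueq]
end

section
/- Let 𝔥 be a realization of a Coxeter system (W,S) and let s ≠ t ∈ S satisfy a_{st}·a_{ts} = 1, where a_{st} = ⟨α_s^∨, α_t⟩. Then the reflections s and t acting on 𝔥 satisfy the braid relation sts = tst. -/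
/-- In a realization, if `s ≠ t` and the Cartan entries satisfy
`a_{st}·a_{ts} = 1` where `a_{st} = ⟨α_s^∨, α_t⟩`, then the reflections satisfy
the braid relation `s t s = t s t` on `V`. -/
theorem braid_relation_of_cartan_product_one {k : Type*} [CommRing k] {V : Type*}
    [AddCommGroup V] [Module k V] [Module.Free k V] [Module.Finite k V]
    {S : Type*} [Fintype S]
    (coroot : S → V) (root : S → Module.Dual k V)
    (hpair : ∀ u : S, root u (coroot u) = 2)
    (s t : S) (hst : s ≠ t)
    (hcartan : root t (coroot s) * root s (coroot t) = 1) :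
    ((fun v : V => v - root s v • coroot s) ∘ (fun v : V => v - root t v • coroot t) ∘
        (fun v : V => v - root s v • coroot s)) =
      ((fun v : V => v - root t v • coroot t) ∘ (fun v : V => v - root s v • coroot s) ∘
        (fun v : V => v - root t v • coroot t)) := by
  funext v
  simp only [Function.comp_apply, map_sub, map_smul, smul_eq_mul, hpair]
  match_scalars
  · ring
  · linear_combination (-(root s v)) * hcartan
  · linear_combination (root t v) * hcartan
end

section
/- Let W' be the infinite dihedral group generated by s_0 and t = s_1⋯s_{n-1}s_n s_{n-1}⋯s_1 inside the affine Weyl group of type Ã_n with its exotic realization over ℤ[q,q^{-1}]. Setting β = α_1 + ⋯ + α_n and β^∨ = α_1^∨ + ⋯ + α_n^∨, one has ⟨β^∨, α_0⟩·⟨α_0^∨, β⟩ = (q+q^{-1})², i.e., the Cartan matrix of the realization of W' given by {β, α_0} and {β^∨, α_0^∨} is the exotic affine Cartan matrix of sl_2 (with entries ⟨α_0^∨,β⟩ = ⟨β^∨,α_0⟩ = -(q+q^{-1})). -/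
/-! For `n ≥ 2` the affine node `0` is joined only to the distinct nodes `1` and `n`, so
`⟨β^∨, α_0⟩ = a_{1,0} + a_{n,0} = -q⁻¹ - q`. Transposing the exotic Cartan matrix exchanges
`q` and `q⁻¹`, so `⟨α_0^∨, β⟩` is the image of `⟨β^∨, α_0⟩` under `q ↦ q⁻¹`, which fixes
`-(q + q⁻¹)`. -/

open LaurentPolynomial

/-- The exotic affine Cartan matrix `a_{ij} = ⟨α_i^∨, α_j⟩` of `sl_{n+1}` over
`ℤ[q,q⁻¹]` (`q = T 1`, `q⁻¹ = T (-1)`): diagonal `2`, `a_{i,i+1} = a_{i+1,i} = -1`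
for `1 ≤ i ≤ n-1`, and affine entries `a_{0,1} = -q`, `a_{n,0} = -q`,
`a_{1,0} = -q⁻¹`, `a_{0,n} = -q⁻¹`, all other entries `0`. -/
noncomputable def exoticPairing (n : ℕ) (i j : Fin (n + 1)) : LaurentPolynomial ℤ :=
  if i = j then 2
  else if (i.val = 0 ∧ j.val = 1) ∨ (i.val = n ∧ j.val = 0) then -T 1
  else if (i.val = 1 ∧ j.val = 0) ∨ (i.val = 0 ∧ j.val = n) then -T (-1)
  else if i.val + 1 = j.val ∨ j.val + 1 = i.val then -1
  else 0

theorem exoticPairing_swap {n : ℕ} (hn : 2 ≤ n) (i j : Fin (n + 1)) :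
    exoticPairing n j i = invert (exoticPairing n i j) := by
  unfold exoticPairing
  simp only [Fin.ext_iff]
  split_ifs <;> first | grind | simp [map_ofNat]

theorem exoticPairing_apply_zero {n : ℕ} (hn : 2 ≤ n) {i : Fin (n + 1)} (hi : i ≠ 0) :
    exoticPairing n i 0 =
      (if i.val = 1 then -T (-1) else 0) + (if i.val = n then -T 1 else 0) := by
  rw [Ne, Fin.ext_iff, Fin.val_zero] at hi
  unfold exoticPairing
  simp only [Fin.ext_iff, Fin.val_zero]
  split_ifs <;> grind

open Fin.NatCast in
theorem sum_exoticPairing_apply_zero {n : ℕ} (hn : 2 ≤ n) :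
    ∑ i ∈ Finset.Icc 1 n, exoticPairing n ((i : ℕ) : Fin (n + 1)) 0 = -(T 1 + T (-1)) := by
  have hval {i : ℕ} (hi : i ∈ Finset.Icc 1 n) : ((i : Fin (n + 1)) : ℕ) = i :=
    Fin.val_cast_of_lt (by grind)
  have hne {i : ℕ} (hi : i ∈ Finset.Icc 1 n) : (i : Fin (n + 1)) ≠ 0 := by
    rw [Ne, Fin.ext_iff, hval hi]
    grind
  calc ∑ i ∈ Finset.Icc 1 n, exoticPairing n (i : Fin (n + 1)) 0
      = ∑ i ∈ Finset.Icc 1 n, ((if i = 1 then -T (-1) else 0) + (if i = n then -T 1 else 0)) :=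
        Finset.sum_congr rfl fun i hi => by rw [exoticPairing_apply_zero hn (hne hi), hval hi]
    _ = -(T 1 + T (-1)) := by
        rw [Finset.sum_add_distrib, Finset.sum_ite_eq' _ 1, Finset.sum_ite_eq' _ n]
        simp [Nat.one_le_of_lt hn]

open Fin.NatCast in
theorem sum_exoticPairing_zero_apply {n : ℕ} (hn : 2 ≤ n) :
    ∑ j ∈ Finset.Icc 1 n, exoticPairing n 0 ((j : ℕ) : Fin (n + 1)) = -(T 1 + T (-1)) := by
  simp_rw [exoticPairing_swap hn _ 0]
  rw [← map_sum, sum_exoticPairing_apply_zero hn]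
  simp [add_comm]

open Fin.NatCast in
/-- For the exotic realization of the affine Weyl group of type `Ã_n`
(`n ≥ 2`), with `β = α_1 + ⋯ + α_n` and `β^∨ = α_1^∨ + ⋯ + α_n^∨` the highest
finite root and coroot, one has `⟨β^∨, α_0⟩ = Σ_{i=1}^n a_{i,0} = -(q+q⁻¹)` and
`⟨α_0^∨, β⟩ = Σ_{j=1}^n a_{0,j} = -(q+q⁻¹)`, so that
`⟨β^∨, α_0⟩·⟨α_0^∨, β⟩ = (q+q⁻¹)²`: the realization of the infinite dihedral group
`W' = ⟨s_0, t⟩` given by `{β, α_0}` and `{β^∨, α_0^∨}` has the exotic affine Cartan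
matrix of `sl_2`. -/
theorem exotic_dihedral_cartan (n : ℕ) (hn : 2 ≤ n) :
    (∑ i ∈ Finset.Icc 1 n, exoticPairing n ((i : ℕ) : Fin (n + 1)) 0)
        = -(T 1 + T (-1)) ∧
    (∑ j ∈ Finset.Icc 1 n, exoticPairing n 0 ((j : ℕ) : Fin (n + 1)))
        = -(T 1 + T (-1)) ∧
    (∑ i ∈ Finset.Icc 1 n, exoticPairing n ((i : ℕ) : Fin (n + 1)) 0) *
        (∑ j ∈ Finset.Icc 1 n, exoticPairing n 0 ((j : ℕ) : Fin (n + 1)))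
      = (T 1 + T (-1)) ^ 2 := by
  rw [sum_exoticPairing_apply_zero hn, sum_exoticPairing_zero_apply hn]
  exact ⟨rfl, rfl, by ring⟩
end
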